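/- The set of absolutely normal real numbers is Π⁰₃ in the Borel hierarchy; that is, there is a family (C_{n,m})_{n,m∈ℕ} of closed subsets of ℝ such that {R ∈ ℝ : R is absolutely normal} = ⋂_n ⋃_m C_{n,m}. -/

import Mathlib

/-
Every base-`b` digit is locally constant at an irrational point, so at an irrational `R` taking
the closure of "the frequency of `d` among the first `n` digits is within `ε` of `1 / b` for all
`n ≥ m`" adds nothing. Thus, among irrationals, simple normality to base `b` is cut out by the
`Π⁰₃` condition `∀ d k, ∃ m, R ∈ closure (…)`. Rationals are never absolutely normal (`p / q`
with `p < q` has every base-`(q + 1)` digit equal to `p`), and the irrationals, the complement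
of countably many points, are `Π⁰₃` as well.
-/

open Filter

/-- The `(i+1)`-st digit (for `i = 0, 1, 2, ...`) of the base-`b` expansion of the
fractional part of a real `R`.  For `R ∈ [0,1)` this is the unique expansion of `R`
whose digits are not eventually all equal to `b - 1`; for general `R`, normality is
defined via the fractional part. -/
noncomputable def rdigit (b : ℕ) (R : ℝ) (i : ℕ) : ℕ :=
  (⌊Int.fract R * (b : ℝ) ^ (i + 1)⌋).toNat % b

/-- The block consisting of the first `n` digits of the base-`b` expansion of `R`. -/
noncomputable def rdigits (b : ℕ) (R : ℝ) (n : ℕ) : List ℕ := (List.range n).map (rdigit b R)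

/-- `R` is simply normal to base `b`: every digit `d < b` occurs with limiting
frequency `1/b` in the base-`b` expansion of `R`. -/
def SimplyNormal (b : ℕ) (R : ℝ) : Prop :=
  ∀ d < b, Tendsto (fun n => ((rdigits b R n).count d : ℝ) / n) atTop (nhds (1 / (b : ℝ)))

/-- `R` is normal to base `b`: it is simply normal to base `b ^ ℓ` for every `ℓ ≥ 1`. -/
def NormalBase (b : ℕ) (R : ℝ) : Prop := ∀ ℓ : ℕ, 1 ≤ ℓ → SimplyNormal (b ^ ℓ) R

/-- `R` is absolutely normal: normal to every base `b ≥ 2`. -/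
def AbsolutelyNormal (R : ℝ) : Prop := ∀ b : ℕ, 2 ≤ b → NormalBase b R

/-- `R` is absolutely abnormal: normal to no base `b ≥ 2`. -/
def AbsolutelyAbnormal (R : ℝ) : Prop := ∀ b : ℕ, 2 ≤ b → ¬ NormalBase b R

open Set Filter Topology

section Pi03

variable {X : Type*} [TopologicalSpace X]

def IsPi03 (S : Set X) : Prop :=
  ∃ C : ℕ → ℕ → Set X, (∀ n m, IsClosed (C n m)) ∧ S = ⋂ n, ⋃ m, C n m

theorem isPi03_iUnion {F : ℕ → Set X} (hF : ∀ m, IsClosed (F m)) : IsPi03 (⋃ m, F m) :=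
  ⟨fun _ => F, fun _ => hF, (iInter_const _).symm⟩

theorem isPi03_iInter_nat {S : ℕ → Set X} (h : ∀ i, IsPi03 (S i)) : IsPi03 (⋂ i, S i) := by
  choose C hC hS using h
  refine ⟨fun n => C n.unpair.1 n.unpair.2, fun n => hC _ _, ?_⟩
  simp_rw [hS]
  exact (iInter_unpair fun i j => ⋃ m, C i j m).symm

theorem isPi03_iInter {ι : Sort*} [Countable ι] {S : ι → Set X} (h : ∀ i, IsPi03 (S i)) :
    IsPi03 (⋂ i, S i) := by
  cases isEmpty_or_nonempty ι with
  | inl _ =>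
    refine ⟨fun _ _ => univ, fun _ _ => isClosed_univ, ?_⟩
    simp only [iInter_of_empty, iUnion_const, iInter_const]
  | inr _ =>
    obtain ⟨g, hg⟩ := exists_surjective_nat ι
    rw [← hg.iInter_comp]
    exact isPi03_iInter_nat fun n => h (g n)

theorem IsPi03.inter {S T : Set X} (hS : IsPi03 S) (hT : IsPi03 T) : IsPi03 (S ∩ T) := by
  rw [inter_eq_iInter]
  exact isPi03_iInter fun b => by cases b <;> assumption

end Pi03

theorem IsOpen.isPi03 {X : Type*} [PseudoEMetricSpace X] {U : Set X} (hU : IsOpen U) :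
    IsPi03 U := by
  obtain ⟨F, hF, -, rfl, -⟩ := hU.exists_iUnion_isClosed
  exact isPi03_iUnion hF

theorem isPi03_setOf_irrational : IsPi03 {x : ℝ | Irrational x} := by
  have : {x : ℝ | Irrational x} = ⋂ q : ℚ, {(q : ℝ)}ᶜ := by
    ext x
    simp [Irrational, eq_comm]
  rw [this]
  exact isPi03_iInter fun _ => isOpen_compl_singleton.isPi03

theorem Irrational.eventually_floor_eq {y : ℝ} (hy : Irrational y) : ∀ᶠ z in 𝓝 y, ⌊z⌋ = ⌊y⌋ := by
  have hlt : (⌊y⌋ : ℝ) < y := (Int.floor_le y).lt_of_ne (hy.ne_int _).symm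
  filter_upwards [Ioo_mem_nhds hlt (Int.lt_floor_add_one y)] with z hz
  exact Int.floor_eq_iff.2 ⟨hz.1.le, hz.2⟩

theorem rdigit_eventually_eq {R : ℝ} (hR : Irrational R) (b i : ℕ) :
    ∀ᶠ x in 𝓝 R, rdigit b x i = rdigit b R i := by
  rcases Nat.eq_zero_or_pos b with rfl | hb
  · simp [rdigit]
  have hcont : ContinuousAt (fun x => Int.fract x * (b : ℝ) ^ (i + 1)) R :=
    (continuousAt_fract (hR.ne_int _)).mul continuousAt_const
  have hirr : Irrational (Int.fract R * (b : ℝ) ^ (i + 1)) := by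
    rw [Int.fract, ← Nat.cast_pow]
    exact (hR.sub_intCast _).mul_natCast (pow_pos hb _).ne'
  filter_upwards [hcont.eventually hirr.eventually_floor_eq] with x hx
  simp only [rdigit, hx]

theorem rdigits_eventually_eq {R : ℝ} (hR : Irrational R) (b n : ℕ) :
    ∀ᶠ x in 𝓝 R, rdigits b x n = rdigits b R n := by
  filter_upwards [(Filter.eventually_all_finset (Finset.range n)).2
    fun i _ => rdigit_eventually_eq hR b i] with x hx
  exact List.map_congr_left fun i hi => hx i (Finset.mem_range.2 (List.mem_range.1 hi))

noncomputable def digitFreq (b : ℕ) (R : ℝ) (d n : ℕ) : ℝ := ((rdigits b R n).count d : ℝ) / n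

def freqNear (b d : ℕ) (ε : ℝ) (m : ℕ) : Set ℝ :=
  {R | ∀ n ≥ m, digitFreq b R d n ∈ Metric.closedBall (1 / (b : ℝ)) ε}

theorem tendsto_digitFreq_iff {b d : ℕ} {R : ℝ} :
    Tendsto (digitFreq b R d) atTop (𝓝 (1 / (b : ℝ))) ↔
      ∀ k : ℕ, ∃ m, R ∈ freqNear b d (1 / (k + 1)) m := by
  simp only [Metric.nhds_basis_closedBall_inv_nat_succ.tendsto_right_iff, forall_const,
    eventually_atTop, freqNear, mem_ofPred_eq]

theorem mem_freqNear_of_mem_closure {b d m : ℕ} {ε : ℝ} {R : ℝ} (hR : Irrational R)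
    (h : R ∈ closure (freqNear b d ε m)) : R ∈ freqNear b d ε m := by
  intro n hn
  obtain ⟨x, hx : rdigits b x n = rdigits b R n, hxR⟩ :=
    mem_closure_iff_nhds.1 h _ (rdigits_eventually_eq hR b n)
  simpa only [digitFreq, hx] using hxR n hn

theorem isPi03_setOf_irrational_and_simplyNormal (b : ℕ) :
    IsPi03 {R | Irrational R ∧ SimplyNormal b R} := by
  have : {R | Irrational R ∧ SimplyNormal b R} = {R | Irrational R} ∩
      ⋂ d, ⋂ (_ : d < b), ⋂ k : ℕ, ⋃ m, closure (freqNear b d (1 / (k + 1)) m) := by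
    ext R
    simp only [SimplyNormal, ← digitFreq.eq_def, tendsto_digitFreq_iff, mem_inter_iff,
      mem_iInter, mem_iUnion, mem_ofPred_eq]
    refine and_congr_right fun hR => forall₂_congr fun d _ => forall_congr' fun k =>
      exists_congr fun m => ⟨fun h => subset_closure h, mem_freqNear_of_mem_closure hR⟩
  rw [this]
  exact isPi03_setOf_irrational.inter <| isPi03_iInter fun d => isPi03_iInter fun _ =>
    isPi03_iInter fun k => isPi03_iUnion fun m => isClosed_closure

theorem rdigit_eq_of_fract_eq_div {p q : ℕ} (hpq : p < q) {R : ℝ} (hR : Int.fract R = p / q)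
    (i : ℕ) : rdigit (q + 1) R i = p := by
  have hq : (0 : ℝ) < q := by exact_mod_cast p.zero_le.trans_lt hpq
  obtain ⟨T, hT⟩ : ∃ T, (q + 1) ^ i = q * T + 1 := by
    obtain ⟨T, hT⟩ := Nat.sub_dvd_pow_sub_pow (q + 1) 1 i
    rw [one_pow, Nat.add_sub_cancel] at hT
    exact ⟨T, by have := Nat.one_le_pow i (q + 1) q.succ_pos; omega⟩
  have hshift :
      (p / q : ℝ) * ((q + 1 : ℕ) : ℝ) ^ (i + 1) = ((q + 1) * (p * T) + p : ℕ) + p / q := by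
    rw [pow_succ, ← Nat.cast_pow, hT]
    push_cast
    field_simp
    ring
  have hfloor : ⌊Int.fract R * ((q + 1 : ℕ) : ℝ) ^ (i + 1)⌋ = ((q + 1) * (p * T) + p : ℕ) := by
    rw [hR, hshift, Int.floor_natCast_add, Int.floor_eq_zero_iff.2 ⟨by positivity,
      (div_lt_one hq).2 (by exact_mod_cast hpq)⟩, add_zero]
  rw [rdigit, hfloor, Int.toNat_natCast, Nat.mul_add_mod, Nat.mod_eq_of_lt (by omega)]

theorem not_simplyNormal_of_rdigit_eq {b d : ℕ} {R : ℝ} (hb : 2 ≤ b) (h : ∀ i, rdigit b R i = d) :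
    ¬ SimplyNormal b R := by
  intro hN
  have hd : d < b := h 0 ▸ Nat.mod_lt _ (by omega)
  have hfreq : ∀ n ≥ 1, digitFreq b R d n = 1 := by
    intro n hn
    have : rdigits b R n = List.replicate n d := by
      simp [rdigits, List.eq_replicate_iff, h]
    rw [digitFreq, this, List.count_replicate_self, div_self (by positivity)]
  have h1 : Tendsto (digitFreq b R d) atTop (𝓝 1) :=
    tendsto_const_nhds.congr' (eventually_atTop.2 ⟨1, fun n hn => (hfreq n hn).symm⟩)
  have : (1 : ℝ) / b = 1 := tendsto_nhds_unique (hN d hd) h1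
  rw [div_eq_one_iff_eq (by positivity)] at this
  exact absurd this (by exact_mod_cast (by omega : 1 ≠ b))

theorem exists_fract_ratCast_eq_div (r : ℚ) : ∃ p q : ℕ, p < q ∧ Int.fract (r : ℝ) = p / q := by
  have hden : (0 : ℤ) < r.den := by exact_mod_cast r.pos
  have hmod := Int.emod_nonneg r.num hden.ne'
  refine ⟨(r.num % r.den).toNat, r.den, by have := Int.emod_lt_of_pos r.num hden; omega, ?_⟩
  rw [Rat.cast_def, Int.fract_div_intCast_eq_div_intCast_mod]
  congr 1
  exact_mod_cast (Int.toNat_of_nonneg hmod).symm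

theorem AbsolutelyNormal.irrational {R : ℝ} (h : AbsolutelyNormal R) : Irrational R := by
  rintro ⟨r, rfl⟩
  obtain ⟨p, q, hpq, hr⟩ := exists_fract_ratCast_eq_div r
  have hbase : SimplyNormal (q + 1) r := by simpa using h (q + 1) (by omega) 1 le_rfl
  exact not_simplyNormal_of_rdigit_eq (by omega) (rdigit_eq_of_fract_eq_div hpq hr) hbase

theorem setOf_absolutelyNormal_eq : {R : ℝ | AbsolutelyNormal R} =
    ⋂ b, ⋂ (_ : 2 ≤ b), ⋂ ℓ, ⋂ (_ : 1 ≤ ℓ), {R | Irrational R ∧ SimplyNormal (b ^ ℓ) R} := by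
  ext R
  simp only [mem_ofPred_eq, mem_iInter]
  exact ⟨fun h b hb ℓ hℓ => ⟨h.irrational, h b hb ℓ hℓ⟩, fun h b hb ℓ hℓ => (h b hb ℓ hℓ).2⟩

/-- The set of absolutely normal real numbers is `Π⁰₃` in the Borel hierarchy: it is a
countable intersection of countable unions of closed sets. -/
theorem absolutelyNormal_pi03 :
    ∃ C : ℕ → ℕ → Set ℝ, (∀ n m, IsClosed (C n m)) ∧
      {R : ℝ | AbsolutelyNormal R} = ⋂ n, ⋃ m, C n m := by
  rw [setOf_absolutelyNormal_eq]
  exact isPi03_iInter fun b => isPi03_iInter fun _ => isPi03_iInter fun ℓ =>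
    isPi03_iInter fun _ => isPi03_setOf_irrational_and_simplyNormal (b ^ ℓ)
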